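/- arXiv:1810.03961 — 2 statements merged into one kernel-verified Lean document; each statement's English description precedes it below -/
import Mathlib

section
/- Optimal FD relay beamforming SNR: for nonzero g, h ∈ ℂ^N and positive reals P, P_r, σ², σ_r², the maximum over nonzero x_r, x_t ∈ ℂ^N of γ(x_r, x_t) = P P_r |x_rᴴ g|² |hᴴ x_t|² / (P_r σ_r² ‖x_r‖² |hᴴ x_t|² + P σ² ‖x_t‖² |x_rᴴ g|² + σ_r² σ² ‖x_t‖² ‖x_r‖²) equals P P_r ‖g‖² ‖h‖² / (P_r σ_r² ‖h‖² + P σ² ‖g‖² + σ_r² σ²), attained at x_r = g/‖g‖ and x_t = h/‖h‖. -/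
noncomputable def ip {N : ℕ} (u v : Fin N → ℂ) : ℂ := ∑ n, star (u n) * v n

noncomputable def nsq {N : ℕ} (u : Fin N → ℂ) : ℝ := ∑ n, (‖u n‖)^2

noncomputable def snrFD {N : ℕ} (P Pr σ2 σr2 : ℝ) (g h xr xt : Fin N → ℂ) : ℝ :=
  P * Pr * (‖ip xr g‖)^2 * (‖ip h xt‖)^2 /
    (Pr * σr2 * nsq xr * (‖ip h xt‖)^2
      + P * σ2 * nsq xt * (‖ip xr g‖)^2
      + σr2 * σ2 * nsq xt * nsq xr)

/-!
Dividing numerator and denominator by ‖x_r‖²‖x_t‖² writes the SNR as a function of the two beam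
gains a = |x_rᴴg|²/‖x_r‖² and b = |hᴴx_t|²/‖x_t‖², and this function is increasing in each gain.
Cauchy–Schwarz bounds the gains by ‖g‖² and ‖h‖², and the matched filters x_r ∥ g, x_t ∥ h attain
both bounds.
-/

section Vectors

variable {N : ℕ}

lemma ip_eq_inner (u v : Fin N → ℂ) :
    ip u v = inner ℂ (WithLp.toLp 2 u : EuclideanSpace ℂ (Fin N)) (WithLp.toLp 2 v) := by
  simp [ip, PiLp.inner_apply, mul_comm]

lemma nsq_eq_norm_sq (u : Fin N → ℂ) :
    nsq u = ‖(WithLp.toLp 2 u : EuclideanSpace ℂ (Fin N))‖ ^ 2 := by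
  rw [EuclideanSpace.norm_sq_eq]
  rfl

lemma nsq_pos {u : Fin N → ℂ} (hu : u ≠ 0) : 0 < nsq u := by
  rw [nsq_eq_norm_sq]
  exact pow_pos (norm_pos_iff.mpr (by simpa using hu)) 2

lemma norm_ip_sq_le (u v : Fin N → ℂ) : ‖ip u v‖ ^ 2 ≤ nsq u * nsq v := by
  rw [ip_eq_inner, nsq_eq_norm_sq, nsq_eq_norm_sq, ← mul_pow]
  gcongr
  exact norm_inner_le_norm _ _

lemma norm_ip_comm (u v : Fin N → ℂ) : ‖ip u v‖ = ‖ip v u‖ := by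
  rw [ip_eq_inner, ip_eq_inner, norm_inner_symm]

lemma norm_ip_smul_self_sq_div_nsq {c : ℂ} (hc : c ≠ 0) (v : Fin N → ℂ) :
    ‖ip (c • v) v‖ ^ 2 / nsq (c • v) = nsq v := by
  rw [ip_eq_inner, nsq_eq_norm_sq, nsq_eq_norm_sq, WithLp.toLp_smul, inner_smul_left,
    inner_self_eq_norm_sq_to_K, norm_smul]
  rcases eq_or_ne ‖(WithLp.toLp 2 v : EuclideanSpace ℂ (Fin N))‖ 0 with hv | hv
  · simp [hv]
  · rw [norm_mul, RCLike.norm_conj, norm_pow, RCLike.norm_ofReal, abs_of_nonneg (norm_nonneg _)]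
    field_simp

end Vectors

noncomputable def snrOfGains (P Pr σ2 σr2 a b : ℝ) : ℝ :=
  P * Pr * a * b / (Pr * σr2 * b + P * σ2 * a + σr2 * σ2)

lemma snrFD_eq_snrOfGains {N : ℕ} (P Pr σ2 σr2 : ℝ) (g h : Fin N → ℂ) {xr xt : Fin N → ℂ}
    (hxr : nsq xr ≠ 0) (hxt : nsq xt ≠ 0) :
    snrFD P Pr σ2 σr2 g h xr xt =
      snrOfGains P Pr σ2 σr2 (‖ip xr g‖ ^ 2 / nsq xr) (‖ip h xt‖ ^ 2 / nsq xt) := by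
  rw [snrFD, snrOfGains, ← div_div_div_cancel_right₀ (mul_ne_zero hxt hxr)]
  congr 1 <;> field_simp

lemma snrOfGains_le_snrOfGains {P Pr σ2 σr2 a a' b b' : ℝ} (hP : 0 ≤ P) (hPr : 0 ≤ Pr)
    (hσ2 : 0 < σ2) (hσr2 : 0 < σr2) (ha : 0 ≤ a) (haa' : a ≤ a') (hb : 0 ≤ b) (hbb' : b ≤ b') :
    snrOfGains P Pr σ2 σr2 a b ≤ snrOfGains P Pr σ2 σr2 a' b' := by
  have ha' : 0 ≤ a' := ha.trans haa'
  have hb' : 0 ≤ b' := hb.trans hbb'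
  rw [snrOfGains, snrOfGains, div_le_div_iff₀ (by positivity) (by positivity), ← sub_nonneg]
  have key : P * Pr * a' * b' * (Pr * σr2 * b + P * σ2 * a + σr2 * σ2)
      - P * Pr * a * b * (Pr * σr2 * b' + P * σ2 * a' + σr2 * σ2)
      = P * Pr * (Pr * σr2 * b * b' * (a' - a) + P * σ2 * a * a' * (b' - b)
          + σr2 * σ2 * (a' * b' - a * b)) := by ring
  have hab : 0 ≤ a' * b' - a * b := sub_nonneg.mpr (mul_le_mul haa' hbb' hb ha')
  have hda : 0 ≤ a' - a := sub_nonneg.mpr haa'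
  have hdb : 0 ≤ b' - b := sub_nonneg.mpr hbb'
  rw [key]
  positivity

section SNR

variable {N : ℕ} {P Pr σ2 σr2 : ℝ} {g h : Fin N → ℂ}

lemma snrFD_le_snrOfGains_nsq (hP : 0 ≤ P) (hPr : 0 ≤ Pr) (hσ2 : 0 < σ2) (hσr2 : 0 < σr2)
    {xr xt : Fin N → ℂ} (hxr : xr ≠ 0) (hxt : xt ≠ 0) :
    snrFD P Pr σ2 σr2 g h xr xt ≤ snrOfGains P Pr σ2 σr2 (nsq g) (nsq h) := by
  have hr := nsq_pos hxr
  have ht := nsq_pos hxt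
  rw [snrFD_eq_snrOfGains P Pr σ2 σr2 g h hr.ne' ht.ne']
  refine snrOfGains_le_snrOfGains hP hPr hσ2 hσr2 (by positivity) ?_ (by positivity) ?_
  · rw [div_le_iff₀ hr, mul_comm]
    exact norm_ip_sq_le xr g
  · rw [div_le_iff₀ ht]
    exact norm_ip_sq_le h xt

lemma snrFD_smul_self (hg : g ≠ 0) (hh : h ≠ 0) {c d : ℂ} (hc : c ≠ 0) (hd : d ≠ 0) :
    snrFD P Pr σ2 σr2 g h (c • g) (d • h) = snrOfGains P Pr σ2 σr2 (nsq g) (nsq h) := by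
  have nsq_smul_ne_zero {u : Fin N → ℂ} {e : ℂ} (hu : u ≠ 0) (he : e ≠ 0) : nsq (e • u) ≠ 0 :=
    (nsq_pos (smul_ne_zero he hu)).ne'
  rw [snrFD_eq_snrOfGains P Pr σ2 σr2 g h (nsq_smul_ne_zero hg hc) (nsq_smul_ne_zero hh hd),
    norm_ip_smul_self_sq_div_nsq hc, norm_ip_comm, norm_ip_smul_self_sq_div_nsq hd]

end SNR

lemma div_sqrt_nsq_eq_smul {N : ℕ} (u : Fin N → ℂ) :
    (fun n => u n / ((Real.sqrt (nsq u) : ℝ) : ℂ)) = ((Real.sqrt (nsq u) : ℂ))⁻¹ • u := by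
  funext n
  simp [div_eq_inv_mul]

theorem stmt_13_general (N : ℕ) (g h : Fin N → ℂ) (hg : g ≠ 0) (hh : h ≠ 0)
    (P Pr σ2 σr2 : ℝ) (hP : 0 < P) (hPr : 0 < Pr) (hσ2 : 0 < σ2) (hσr2 : 0 < σr2) :
    IsGreatest {y : ℝ | ∃ xr xt : Fin N → ℂ, xr ≠ 0 ∧ xt ≠ 0 ∧
        y = snrFD P Pr σ2 σr2 g h xr xt}
      (P * Pr * nsq g * nsq h / (Pr * σr2 * nsq h + P * σ2 * nsq g + σr2 * σ2)) ∧
    snrFD P Pr σ2 σr2 g h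
        (fun n => g n / ((Real.sqrt (nsq g) : ℝ) : ℂ))
        (fun n => h n / ((Real.sqrt (nsq h) : ℝ) : ℂ))
      = P * Pr * nsq g * nsq h / (Pr * σr2 * nsq h + P * σ2 * nsq g + σr2 * σ2) := by
  have hcg : ((Real.sqrt (nsq g) : ℂ))⁻¹ ≠ 0 := by
    simpa using (Real.sqrt_pos.mpr (nsq_pos hg)).ne'
  have hch : ((Real.sqrt (nsq h) : ℂ))⁻¹ ≠ 0 := by
    simpa using (Real.sqrt_pos.mpr (nsq_pos hh)).ne'
  rw [div_sqrt_nsq_eq_smul g, div_sqrt_nsq_eq_smul h]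
  have hopt : snrFD P Pr σ2 σr2 g h _ _ = snrOfGains P Pr σ2 σr2 (nsq g) (nsq h) :=
    snrFD_smul_self hg hh hcg hch
  refine ⟨⟨⟨_, _, smul_ne_zero hcg hg, smul_ne_zero hch hh, hopt.symm⟩, ?_⟩, hopt⟩
  rintro _ ⟨xr, xt, hxr, hxt, rfl⟩
  exact snrFD_le_snrOfGains_nsq hP.le hPr.le hσ2 hσr2 hxr hxt

theorem stmt_13 (N : ℕ) (hN : 0 < N) (g h : Fin N → ℂ) (hg : g ≠ 0) (hh : h ≠ 0)
    (P Pr σ2 σr2 : ℝ) (hP : 0 < P) (hPr : 0 < Pr) (hσ2 : 0 < σ2) (hσr2 : 0 < σr2) :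
    IsGreatest {y : ℝ | ∃ xr xt : Fin N → ℂ, xr ≠ 0 ∧ xt ≠ 0 ∧
        y = snrFD P Pr σ2 σr2 g h xr xt}
      (P * Pr * nsq g * nsq h / (Pr * σr2 * nsq h + P * σ2 * nsq g + σr2 * σ2)) ∧
    snrFD P Pr σ2 σr2 g h
        (fun n => g n / ((Real.sqrt (nsq g) : ℝ) : ℂ))
        (fun n => h n / ((Real.sqrt (nsq h) : ℝ) : ℂ))
      = P * Pr * nsq g * nsq h / (Pr * σr2 * nsq h + P * σ2 * nsq g + σr2 * σ2) :=
  stmt_13_general N g h hg hh P Pr σ2 σr2 hP hPr hσ2 hσr2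
end

section
/- Linear SNR scaling for the FD AF relay: if a_N = ‖g^{(N)}‖²/N → ϱ_g² and b_N = ‖h^{(N)}‖²/N → ϱ_h² as N → ∞ with ϱ_g², ϱ_h² > 0, then γ_N / N → P P_r ϱ_g² ϱ_h² / (P_r σ_r² ϱ_h² + P σ² ϱ_g²), where γ_N = P P_r (N a_N)(N b_N) / (P_r σ_r² N b_N + P σ² N a_N + σ_r² σ²). -/
theorem stmt_14 (a b : ℕ → ℝ) (ϱg2 ϱh2 P Pr σ2 σr2 : ℝ)
    (ha : ∀ N, 0 < a N) (hb : ∀ N, 0 < b N)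
    (hϱg : 0 < ϱg2) (hϱh : 0 < ϱh2)
    (hP : 0 < P) (hPr : 0 < Pr) (hσ2 : 0 < σ2) (hσr2 : 0 < σr2)
    (hta : Filter.Tendsto a Filter.atTop (nhds ϱg2))
    (htb : Filter.Tendsto b Filter.atTop (nhds ϱh2)) :
    Filter.Tendsto (fun N : ℕ =>
        (P * Pr * ((N : ℝ) * a N) * ((N : ℝ) * b N) /
          (Pr * σr2 * ((N : ℝ) * b N) + P * σ2 * ((N : ℝ) * a N) + σr2 * σ2)) / (N : ℝ))
      Filter.atTop (nhds (P * Pr * ϱg2 * ϱh2 / (Pr * σr2 * ϱh2 + P * σ2 * ϱg2))) := by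
  have hDlim : (0:ℝ) < Pr * σr2 * ϱh2 + P * σ2 * ϱg2 := by positivity
  have h0 : Filter.Tendsto (fun N : ℕ => σr2 * σ2 / (N : ℝ)) Filter.atTop (nhds 0) := by
    simpa using Filter.Tendsto.div_atTop (tendsto_const_nhds (x := σr2 * σ2))
      tendsto_natCast_atTop_atTop
  have hden : Filter.Tendsto (fun N : ℕ =>
      Pr * σr2 * b N + P * σ2 * a N + σr2 * σ2 / (N : ℝ)) Filter.atTop
      (nhds (Pr * σr2 * ϱh2 + P * σ2 * ϱg2)) := by
    have := (((htb.const_mul (Pr * σr2)).add (hta.const_mul (P * σ2))).add h0)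
    simpa using this
  have hnum : Filter.Tendsto (fun N : ℕ => P * Pr * a N * b N) Filter.atTop
      (nhds (P * Pr * ϱg2 * ϱh2)) := by
    have := (hta.const_mul (P * Pr)).mul htb
    simpa [mul_assoc] using this
  have hmain := hnum.div hden (ne_of_gt hDlim)
  refine hmain.congr' ?_
  filter_upwards [Filter.eventually_gt_atTop 0] with N hN
  have hNpos : (0:ℝ) < (N : ℝ) := by exact_mod_cast hN
  have hD : (0:ℝ) < Pr * σr2 * ((N : ℝ) * b N) + P * σ2 * ((N : ℝ) * a N) + σr2 * σ2 := by
    have := ha N; have := hb N; positivity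
  have hD2 : (0:ℝ) < Pr * σr2 * b N + P * σ2 * a N + σr2 * σ2 / (N : ℝ) := by
    have := ha N; have := hb N; positivity
  simp only [Pi.div_apply]
  rw [div_div, div_eq_div_iff hD2.ne' (by positivity)]
  field_simp
end
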